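/- Let p be any integer, x a real number in (0,1), and η ∈ ℂ with Im η > 0. Then I_p(x, 0, η) = ( log(1 − e^{2πix}) − πi x − log(−2πi) ) · Li_p(e^{2πiη}), where all logarithms are principal branches. -/

import Mathlib

open MeasureTheory Real Filter

/-- The polylogarithm `Li_p(w) = ∑_{j ≥ 1} w^j / j^p`, for integer index `p`. -/
noncomputable def Li (p : ℤ) (w : ℂ) : ℂ := ∑' j : ℕ, w ^ (j + 1) / ((j : ℂ) + 1) ^ p

/-- The function `I_p(x,ξ,η)`: the integral along the straight segment from `0` to `πix`
(parametrized by `y = t·πix`, `t ∈ [0,1]`) of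
`Li_p(e^{-2ξy+2πiη})/tanh y − Li_p(e^{2πiη})/y`, plus `Li_p(e^{2πiη})·log x`. -/
noncomputable def Ifun (p : ℤ) (x ξ η : ℂ) : ℂ :=
  (∫ t in (0 : ℝ)..1, ((π : ℂ) * Complex.I * x) *
      (Li p (Complex.exp (-2 * ξ * ((t : ℂ) * ((π : ℂ) * Complex.I * x)) +
            2 * (π : ℂ) * Complex.I * η)) /
          Complex.tanh ((t : ℂ) * ((π : ℂ) * Complex.I * x)) -
        Li p (Complex.exp (2 * (π : ℂ) * Complex.I * η)) /
          ((t : ℂ) * ((π : ℂ) * Complex.I * x)))) +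
    Li p (Complex.exp (2 * (π : ℂ) * Complex.I * η)) * Complex.log x


/-! With `ξ = 0` the first polylogarithm no longer depends on `y`, so the integrand is
`L · (coth y - 1/y)` with `L = Li_p(e^{2πiη})`. On the segment `y = iπxt` we have
`coth y = -i cot (πxt)`, so the integral becomes `L ∫₀¹ (πx cot (πxt) - 1/t) dt`, and
`t ↦ log (sinc (πxt))` is a primitive of that integrand which is continuous on `[0, 1]`; the
integral is `L log (sin (πx) / (πx))`. On the right-hand side,
`1 - e^{iθ} = 2 sin (θ/2) e^{i(θ-π)/2}` with `(θ-π)/2 ∈ (-π/2, π/2)`, so both sides equal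
`L (log sin (πx) - log π)`. -/

namespace Real

lemma mul_cos_le_sin {u : ℝ} (h0 : 0 ≤ u) (h1 : u ≤ π) : u * cos u ≤ sin u := by
  rcases lt_or_ge u (π / 2) with hu | hu
  · have hcos : 0 < cos u := cos_pos_of_mem_Ioo ⟨by linarith, hu⟩
    have := le_tan h0 hu
    rwa [tan_eq_sin_div_cos, le_div_iff₀ hcos] at this
  · have hcos : cos u ≤ 0 := cos_nonpos_of_pi_div_two_le_of_le hu (by linarith)
    nlinarith [sin_nonneg_of_nonneg_of_le_pi h0 h1]

lemma mul_cot_le_one {u : ℝ} (h0 : 0 < u) (h1 : u < π) : u * cot u ≤ 1 := by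
  have hsin := sin_pos_of_pos_of_lt_pi h0 h1
  rw [cot_eq_cos_div_sin, ← mul_div_assoc, div_le_one hsin]
  exact mul_cos_le_sin h0.le h1.le

lemma sinc_pos {u : ℝ} (h0 : 0 ≤ u) (h1 : u < π) : 0 < sinc u := by
  rcases h0.eq_or_lt with rfl | hu
  · simp
  · rw [sinc_of_ne_zero hu.ne']
    exact div_pos (sin_pos_of_pos_of_lt_pi hu h1) hu

lemma hasDerivAt_log_sinc_mul {a t : ℝ} (ha : a ≠ 0) (ht : t ≠ 0) (hs : sin (a * t) ≠ 0) :
    HasDerivAt (fun s => log (sinc (a * s))) (a * cot (a * t) - 1 / t) t := by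
  have hsin : HasDerivAt (fun s => sin (a * s)) (cos (a * t) * a) t := by
    simpa using ((hasDerivAt_id t).const_mul a).sin
  have hlog := ((hsin.log hs).sub (hasDerivAt_log ht)).sub_const (log a)
  refine hlog.congr_of_eventuallyEq ?_ |>.congr_deriv ?_
  · filter_upwards [eventually_ne_nhds ht, hsin.continuousAt.eventually_ne hs] with s hs0 hss
    rw [sinc_of_ne_zero (mul_ne_zero ha hs0), log_div hss (mul_ne_zero ha hs0), log_mul ha hs0]
    simp only [Pi.sub_apply]
    ring
  · rw [cot_eq_cos_div_sin]
    field_simp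

lemma integral_mul_cot_sub_inv {a : ℝ} (h0 : 0 < a) (h1 : a < π) :
    ∫ t in (0 : ℝ)..1, (a * cot (a * t) - 1 / t) = log (sinc a) := by
  have hat {t : ℝ} (ht : t ∈ Set.Ioo (0 : ℝ) 1) : 0 < a * t ∧ a * t < π :=
    ⟨mul_pos h0 ht.1, by nlinarith [ht.2]⟩
  have hcont : ContinuousOn (fun s => log (sinc (a * s))) (Set.Icc 0 1) := fun t ht =>
    ((continuous_sinc.comp (continuous_const_mul a)).continuousAt.log
      (sinc_pos (by nlinarith [ht.1]) (by nlinarith [ht.2])).ne').continuousWithinAt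
  have hderiv (t : ℝ) (ht : t ∈ Set.Ioo (0 : ℝ) 1) :
      HasDerivAt (fun s => log (sinc (a * s))) (a * cot (a * t) - 1 / t) t :=
    hasDerivAt_log_sinc_mul h0.ne' ht.1.ne' (sin_pos_of_pos_of_lt_pi (hat ht).1 (hat ht).2).ne'
  -- The integrand is the derivative of a function continuous on `[0, 1]` and has constant sign.
  have hint : IntervalIntegrable (fun t => a * cot (a * t) - 1 / t) volume 0 1 := by
    refine (intervalIntegrable_iff_integrableOn_Ioc_of_le zero_le_one).2 ?_
    have hle (t : ℝ) (ht : t ∈ Set.Ioo (0 : ℝ) 1) : 0 ≤ -(a * cot (a * t) - 1 / t) := by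
      have := mul_cot_le_one (hat ht).1 (hat ht).2
      rw [neg_nonneg, sub_nonpos, le_div_iff₀ ht.1]
      linarith
    simpa only [Pi.neg_def, neg_neg] using (intervalIntegral.integrableOn_deriv_of_nonneg hcont.neg
      (fun t ht => (hderiv t ht).neg) hle).neg
  rw [intervalIntegral.integral_eq_sub_of_hasDerivAt_of_le zero_le_one hcont hderiv hint]
  simp

end Real

lemma one_sub_exp_mul_I (θ : ℝ) :
    1 - Complex.exp (θ * Complex.I) =
      ↑(2 * sin (θ / 2)) * Complex.exp (↑((θ - π) / 2) * Complex.I) := by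
  have hsplit : Complex.exp (↑((θ - π) / 2) * Complex.I) =
      Complex.exp (↑(θ / 2) * Complex.I) * -Complex.I := by
    rw [← Complex.exp_neg_pi_div_two_mul_I, ← Complex.exp_add]
    push_cast
    ring_nf
  have hθ : Complex.exp (θ * Complex.I) =
      Complex.exp (↑(θ / 2) * Complex.I) * Complex.exp (↑(θ / 2) * Complex.I) := by
    rw [← Complex.exp_add]
    push_cast
    ring_nf
  rw [hsplit, hθ, Complex.ofReal_mul, Complex.ofReal_sin, Complex.ofReal_ofNat, Complex.two_sin,
    neg_mul, Complex.exp_neg]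
  field_simp
  ring_nf
  rw [Complex.I_sq]
  ring

lemma log_one_sub_exp_mul_I {θ : ℝ} (h0 : 0 < θ) (h1 : θ < 2 * π) :
    Complex.log (1 - Complex.exp (θ * Complex.I)) =
      ↑(log (2 * sin (θ / 2))) + ↑((θ - π) / 2) * Complex.I := by
  have hsin : 0 < sin (θ / 2) := sin_pos_of_pos_of_lt_pi (by linarith) (by linarith)
  rw [one_sub_exp_mul_I, Complex.log_ofReal_mul (by positivity) (Complex.exp_ne_zero _),
    Complex.log_exp]
  all_goals
    simp only [Complex.mul_I_im, Complex.ofReal_re]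
    linarith [pi_pos]

lemma log_neg_two_pi_I :
    Complex.log (-(2 * π * Complex.I)) = ↑(log (2 * π)) - π / 2 * Complex.I := by
  rw [show -(2 * π * Complex.I) = ↑(2 * π) * -Complex.I by push_cast; ring,
    Complex.log_ofReal_mul (by positivity) (neg_ne_zero.2 Complex.I_ne_zero), Complex.log_neg_I]
  ring

lemma mul_I_mul_div_tanh_sub_div (L : ℂ) {a : ℝ} (ha : a ≠ 0) (t : ℝ) :
    (a * Complex.I) * (L / Complex.tanh (t * (a * Complex.I)) - L / (t * (a * Complex.I))) =
      L * ↑(a * cot (a * t) - 1 / t) := by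
  rcases eq_or_ne t 0 with rfl | ht
  · simp [Complex.cot_eq_cos_div_sin]
  rw [show (t : ℂ) * (a * Complex.I) = ↑(a * t) * Complex.I by push_cast; ring,
    Complex.tanh_mul_I, ← Complex.ofReal_tan, Real.cot_eq_cos_div_sin, tan_eq_sin_div_cos]
  have haC : (a : ℂ) ≠ 0 := Complex.ofReal_ne_zero.2 ha
  push_cast
  field_simp

lemma integral_mul_I_mul_div_tanh_sub_div (L : ℂ) {a : ℝ} (h0 : 0 < a) (h1 : a < π) :
    ∫ t in (0 : ℝ)..1,
        (a * Complex.I) * (L / Complex.tanh (t * (a * Complex.I)) - L / (t * (a * Complex.I))) =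
      L * log (sinc a) := by
  simp_rw [mul_I_mul_div_tanh_sub_div L h0.ne']
  rw [intervalIntegral.integral_const_mul, intervalIntegral.integral_ofReal,
    integral_mul_cot_sub_inv h0 h1]

theorem stmt13_general (p : ℤ) (x : ℝ) (hx0 : 0 < x) (hx1 : x < 1) (η : ℂ) :
    Ifun p (x : ℂ) 0 η =
      (Complex.log (1 - Complex.exp (2 * (π : ℂ) * Complex.I * x)) -
          (π : ℂ) * Complex.I * x - Complex.log (-(2 * (π : ℂ) * Complex.I))) *
        Li p (Complex.exp (2 * (π : ℂ) * Complex.I * η)) := by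
  have hπx : 0 < π * x := mul_pos pi_pos hx0
  have hsin : 0 < sin (π * x) := sin_pos_of_pos_of_lt_pi hπx (by nlinarith [pi_pos])
  have hpath : (π : ℂ) * Complex.I * x = ↑(π * x) * Complex.I := by push_cast; ring
  have hangle : 2 * (π : ℂ) * Complex.I * x = ↑(2 * (π * x)) * Complex.I := by push_cast; ring
  simp only [Ifun, mul_zero, zero_mul, zero_add, hpath]
  rw [integral_mul_I_mul_div_tanh_sub_div _ hπx (by nlinarith [pi_pos]), hangle,
    log_one_sub_exp_mul_I (by positivity) (by nlinarith [pi_pos]), log_neg_two_pi_I,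
    sinc_of_ne_zero hπx.ne', log_div hsin.ne' hπx.ne', log_mul pi_pos.ne' hx0.ne',
    ← Complex.ofReal_log hx0.le, mul_div_cancel_left₀ _ two_ne_zero,
    log_mul two_ne_zero hsin.ne', log_mul two_ne_zero pi_pos.ne']
  push_cast
  ring

theorem stmt13 (p : ℤ) (x : ℝ) (hx0 : 0 < x) (hx1 : x < 1) (η : ℂ) (hη : 0 < η.im) :
    Ifun p (x : ℂ) 0 η =
      (Complex.log (1 - Complex.exp (2 * (π : ℂ) * Complex.I * x)) -
          (π : ℂ) * Complex.I * x - Complex.log (-(2 * (π : ℂ) * Complex.I))) *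
        Li p (Complex.exp (2 * (π : ℂ) * Complex.I * η)) :=
  stmt13_general p x hx0 hx1 η
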